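/- Let G be a connected graph on n vertices with minimum tenacity among all connected graphs with n vertices and m edges, where n−1 ≤ m ≤ C(n,2)−1, and let k be the unique integer with C(k,2) + (n−k)(k−1) < m ≤ C(k,2) + (n−k)k. Then T(G) = (k+1)/(n−k). -/

import Mathlib

open SimpleGraph

/-- Number of connected components `ω(G)`. -/
noncomputable def SimpleGraph.omegaComp {W : Type*} (G : SimpleGraph W) : ℕ :=
  Nat.card G.ConnectedComponent

/-- Order `τ(G)` of a largest connected component of `G`. -/
noncomputable def SimpleGraph.tauMax {W : Type*} (G : SimpleGraph W) : ℕ :=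
  sSup (Set.range fun c : G.ConnectedComponent =>
    Nat.card {v : W // G.connectedComponentMk v = c})

/-- The graph `G - X` obtained by deleting the vertices of `X`. -/
def SimpleGraph.delVerts {V : Type*} (G : SimpleGraph V) (X : Finset V) :
    SimpleGraph {v : V // v ∉ X} :=
  SimpleGraph.comap Subtype.val G

/-- `X` is a vertex cut of `G`: deleting `X` leaves more than one component. -/
def SimpleGraph.IsVertexCut {V : Type*} (G : SimpleGraph V) (X : Finset V) : Prop :=
  1 < (G.delVerts X).omegaComp

/-- The tenacity `T(G) = min over vertex cuts X of (|X| + τ(G−X)) / ω(G−X)`. -/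
noncomputable def SimpleGraph.tenacity {V : Type*} [Fintype V] (G : SimpleGraph V) : ℝ :=
  sInf { t : ℝ | ∃ X : Finset V, G.IsVertexCut X ∧
    t = ((X.card : ℝ) + (G.delVerts X).tauMax) / (G.delVerts X).omegaComp }

/-- Vertex degree via `Nat.card` (no decidability assumptions needed). -/
noncomputable def SimpleGraph.deg {V : Type*} (G : SimpleGraph V) (v : V) : ℕ :=
  Nat.card (G.neighborSet v)

/-- A unicyclic graph: connected with as many edges as vertices. -/
def SimpleGraph.Unicyclic {V : Type*} [Fintype V] (G : SimpleGraph V) : Prop :=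
  G.Connected ∧ Nat.card G.edgeSet = Fintype.card V

/-! For a vertex cut `X` with `x = |X|` and `τ = τ(G - X)`, a vertex outside `X` has all its
neighbours in `X` or in its own component of `G - X`, so its degree is at most `x + τ - 1` and
`2m ≤ x (n - 1) + (n - x)(x + τ - 1)`. The lower bound on `m` then forces `x + τ ≥ k + 1`; as
`ω(G - X) ≤ n - x - τ + 1 ≤ n - k`, every cut has value at least `(k + 1)/(n - k)`.
Conversely, the upper bound on `m` leaves room for a connected graph with `m` edges inside the
complete split graph with a `k`-clique `K`; deleting `K` leaves `n - k` isolated vertices, a cut of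
value `(k + 1)/(n - k)`, and minimality of `G` transfers this bound to `G`. -/

lemma Nat.two_mul_choose_two (n : ℕ) : 2 * n.choose 2 = n * (n - 1) := by
  rw [Nat.choose_two_right, Nat.mul_div_cancel' n.even_mul_pred_self.two_dvd]

lemma Nat.one_le_and_add_two_le_of_choose_two_bounds {n m k : ℕ} (h2 : m ≤ n.choose 2 - 1)
    (hk1 : k.choose 2 + (n - k) * (k - 1) < m) (hk2 : m ≤ k.choose 2 + (n - k) * k) :
    1 ≤ k ∧ k + 2 ≤ n := by
  have hk : 1 ≤ k := Nat.pos_of_ne_zero fun hk0 => by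
    subst hk0
    simp at hk1 hk2
    omega
  refine ⟨hk, ?_⟩
  by_contra! hn
  rcases Nat.lt_or_ge k n with hkn | hkn
  · obtain rfl : n = k + 1 := by omega
    have hchoose : (k + 1).choose 2 = k.choose 2 + k := by
      rw [Nat.choose_succ_succ', Nat.choose_one_right, add_comm]
    simp only [add_tsub_cancel_left, one_mul] at hk1 hk2
    omega
  · rw [Nat.sub_eq_zero_of_le hkn] at hk1 hk2
    omega

namespace SimpleGraph

section Components

variable {W : Type*}

lemma omegaComp_bot : (⊥ : SimpleGraph W).omegaComp = Nat.card W :=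
  Nat.card_congr (Equiv.ofBijective _
    ⟨fun _ _ h => reachable_bot.mp (ConnectedComponent.exact h),
      fun c => c.exists_rep⟩).symm

lemma tauMax_bot [Nonempty W] : (⊥ : SimpleGraph W).tauMax = 1 := by
  have hfiber (c : (⊥ : SimpleGraph W).ConnectedComponent) :
      Nat.card {v // (⊥ : SimpleGraph W).connectedComponentMk v = c} = 1 := by
    obtain ⟨w, rfl⟩ := c.exists_rep
    refine Nat.card_eq_one_iff_exists.mpr ⟨⟨w, rfl⟩, fun v => Subtype.ext ?_⟩
    exact reachable_bot.mp (ConnectedComponent.exact v.2)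
  simp only [tauMax, hfiber, Set.range_const, csSup_singleton]

variable [Fintype W] (G : SimpleGraph W)

lemma card_fiber_le_tauMax (c : G.ConnectedComponent) :
    Nat.card {v // G.connectedComponentMk v = c} ≤ G.tauMax :=
  le_csSup (Set.finite_range _).bddAbove ⟨c, rfl⟩

lemma exists_card_fiber_eq_tauMax [Nonempty W] :
    ∃ c : G.ConnectedComponent, Nat.card {v // G.connectedComponentMk v = c} = G.tauMax :=
  (Set.range_nonempty _).csSup_mem (Set.finite_range _)

lemma card_fiber_pos (c : G.ConnectedComponent) :
    0 < Nat.card {v // G.connectedComponentMk v = c} := by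
  induction c using ConnectedComponent.ind with
  | h v => exact @Nat.card_pos _ ⟨⟨v, rfl⟩⟩ _

lemma tauMax_pos [Nonempty W] : 0 < G.tauMax := by
  obtain ⟨c, hc⟩ := G.exists_card_fiber_eq_tauMax
  exact hc ▸ G.card_fiber_pos c

open scoped Classical in
lemma sum_card_fiber :
    ∑ c : G.ConnectedComponent, Nat.card {v // G.connectedComponentMk v = c} =
      Fintype.card W := by
  simp only [Nat.card_eq_fintype_card, ← Fintype.card_sigma]
  exact Fintype.card_congr (Equiv.sigmaFiberEquiv _)

open scoped Classical in
lemma omegaComp_add_tauMax_le : G.omegaComp + G.tauMax ≤ Fintype.card W + 1 := by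
  cases isEmpty_or_nonempty W
  · simp [omegaComp, tauMax, Set.range_eq_empty]
  obtain ⟨c₀, hc₀⟩ := G.exists_card_fiber_eq_tauMax
  calc G.omegaComp + G.tauMax = ∑ c ∈ Finset.univ.erase c₀, 1 + 1 + G.tauMax := by
        rw [Finset.sum_erase_add _ _ (Finset.mem_univ c₀), omegaComp, Nat.card_eq_fintype_card,
          Fintype.card_eq_sum_ones]
    _ ≤ ∑ c ∈ Finset.univ.erase c₀, Nat.card {v // G.connectedComponentMk v = c} + 1 +
          Nat.card {v // G.connectedComponentMk v = c₀} := by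
        gcongr with c
        · exact G.card_fiber_pos c
        · exact hc₀.ge
    _ = Fintype.card W + 1 := by
        rw [add_right_comm, Finset.sum_erase_add _ _ (Finset.mem_univ c₀), sum_card_fiber]

end Components

section Tenacity

variable {V : Type*} (G : SimpleGraph V)

lemma IsVertexCut.nonempty {X : Finset V} (hX : G.IsVertexCut X) : Nonempty {v // v ∉ X} := by
  obtain ⟨c⟩ := (Nat.card_pos_iff.mp (Nat.zero_lt_of_lt hX)).1
  exact ⟨c.out⟩

lemma delVerts_eq_bot {X : Finset V} (h : ∀ u v, u ∉ X → v ∉ X → ¬ G.Adj u v) :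
    G.delVerts X = ⊥ := by
  ext u v
  exact iff_of_false (h u v u.2 v.2) id

variable [Fintype V]

lemma tenacity_le_of_isVertexCut {X : Finset V} (hX : G.IsVertexCut X) :
    G.tenacity ≤ ((X.card : ℝ) + (G.delVerts X).tauMax) / (G.delVerts X).omegaComp :=
  csInf_le ⟨0, by rintro _ ⟨Y, -, rfl⟩; positivity⟩ ⟨X, hX, rfl⟩

lemma le_tenacity {t : ℝ} (hcut : ∃ X, G.IsVertexCut X)
    (h : ∀ X, G.IsVertexCut X →
      t ≤ ((X.card : ℝ) + (G.delVerts X).tauMax) / (G.delVerts X).omegaComp) :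
    t ≤ G.tenacity := by
  obtain ⟨X, hX⟩ := hcut
  exact le_csInf ⟨_, X, hX, rfl⟩ fun _ ⟨Y, hY, hYt⟩ => hYt ▸ h Y hY

lemma card_delVerts_verts (X : Finset V) :
    Nat.card {v // v ∉ X} = Fintype.card V - X.card := by
  classical
  rw [Nat.card_eq_fintype_card, Fintype.card_subtype_compl, Fintype.card_coe]

lemma tenacity_le_of_delVerts_eq_bot {K : Finset V} (hK : G.delVerts K = ⊥)
    (hcard : K.card + 2 ≤ Fintype.card V) :
    G.tenacity ≤ ((K.card : ℝ) + 1) / ((Fintype.card V : ℝ) - K.card) := by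
  have hω : (G.delVerts K).omegaComp = Fintype.card V - K.card := by
    rw [hK, omegaComp_bot, card_delVerts_verts]
  have : Nonempty {v // v ∉ K} := by
    rw [← Nat.card_pos_iff.trans (and_iff_left inferInstance), card_delVerts_verts]
    omega
  have hcut : G.IsVertexCut K := by
    rw [IsVertexCut, hω]
    omega
  refine (G.tenacity_le_of_isVertexCut hcut).trans_eq ?_
  rw [hω, hK, tauMax_bot, Nat.cast_sub (by omega), Nat.cast_one]

lemma exists_isVertexCut_of_ne_top (hG : G ≠ ⊤) : ∃ X, G.IsVertexCut X := by
  classical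
  obtain ⟨u, v, huv, hnadj⟩ : ∃ u v, u ≠ v ∧ ¬ G.Adj u v := by
    by_contra! h
    exact hG (eq_top_iff.mpr fun u v huv => h u v huv)
  have hmem (w : V) : w ∉ Finset.univ \ {u, v} ↔ w = u ∨ w = v := by
    simp only [Finset.mem_sdiff, Finset.mem_univ, Finset.mem_insert, Finset.mem_singleton]
    tauto
  refine ⟨Finset.univ \ {u, v}, ?_⟩
  have hbot : G.delVerts (Finset.univ \ {u, v}) = ⊥ := by
    refine G.delVerts_eq_bot fun a b ha hb hab => ?_
    rcases (hmem a).mp ha with rfl | rfl <;> rcases (hmem b).mp hb with rfl | rfl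
    exacts [hab.ne rfl, hnadj hab, hnadj hab.symm, hab.ne rfl]
  rw [IsVertexCut, hbot, omegaComp_bot, card_delVerts_verts, Finset.card_sdiff_of_subset
    (Finset.subset_univ _), Finset.card_univ, Finset.card_pair huv]
  have := Finset.card_le_univ ({u, v} : Finset V)
  rw [Finset.card_pair huv] at this
  omega

end Tenacity

section CutEdges

variable {V : Type*} [Fintype V] [DecidableEq V] (G : SimpleGraph V) [DecidableRel G.Adj]

lemma degree_add_one_le_card_add_tauMax (X : Finset V) {v : V} (hv : v ∉ X) :
    G.degree v + 1 ≤ X.card + (G.delVerts X).tauMax := by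
  classical
  set c := (G.delVerts X).connectedComponentMk ⟨v, hv⟩
  let C : Finset V := (Finset.univ : Finset {w // (G.delVerts X).connectedComponentMk w = c}).map
    ⟨fun w => w.1.1, fun a b h => Subtype.ext (Subtype.ext h)⟩
  have hvC : v ∈ C := Finset.mem_map.mpr ⟨⟨⟨v, hv⟩, rfl⟩, Finset.mem_univ _, rfl⟩
  have hC : C.card ≤ (G.delVerts X).tauMax := by
    rw [Finset.card_map, Finset.card_univ, ← Nat.card_eq_fintype_card]
    exact card_fiber_le_tauMax _ c
  have hsub : G.neighborFinset v ⊆ X ∪ C.erase v := by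
    intro w hw
    rw [mem_neighborFinset] at hw
    by_cases hwX : w ∈ X
    · exact Finset.mem_union_left _ hwX
    refine Finset.mem_union_right _ (Finset.mem_erase.mpr ⟨hw.ne.symm, ?_⟩)
    have hreach : (G.delVerts X).Reachable ⟨w, hwX⟩ ⟨v, hv⟩ :=
      (show (G.delVerts X).Adj ⟨w, hwX⟩ ⟨v, hv⟩ from hw.symm).reachable
    exact Finset.mem_map.mpr
      ⟨⟨⟨w, hwX⟩, ConnectedComponent.sound hreach⟩, Finset.mem_univ _, rfl⟩
  calc G.degree v + 1 ≤ (X ∪ C.erase v).card + 1 := by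
        rw [← card_neighborFinset_eq_degree]
        exact Nat.add_le_add_right (Finset.card_le_card hsub) 1
    _ ≤ X.card + (C.erase v).card + 1 := by
        gcongr
        exact Finset.card_union_le _ _
    _ ≤ X.card + (G.delVerts X).tauMax := by
        rw [Finset.card_erase_of_mem hvC]
        have := Finset.card_pos.mpr ⟨v, hvC⟩
        omega

lemma two_mul_card_edgeFinset_le (X : Finset V) :
    2 * G.edgeFinset.card ≤ X.card * (Fintype.card V - 1) +
      (Fintype.card V - X.card) * (X.card + (G.delVerts X).tauMax - 1) := by
  rw [← sum_degrees_eq_twice_card_edges, ← Finset.sum_add_sum_compl X]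
  gcongr
  · calc ∑ v ∈ X, G.degree v ≤ ∑ _v ∈ X, (Fintype.card V - 1) :=
          Finset.sum_le_sum fun v _ => Nat.le_sub_one_of_lt (G.degree_lt_card_verts v)
      _ = _ := by rw [Finset.sum_const, smul_eq_mul]
  · calc ∑ v ∈ Xᶜ, G.degree v ≤ ∑ _v ∈ Xᶜ, (X.card + (G.delVerts X).tauMax - 1) :=
          Finset.sum_le_sum fun v hv =>
            Nat.le_sub_one_of_lt (G.degree_add_one_le_card_add_tauMax X (Finset.mem_compl.mp hv))
      _ = _ := by rw [Finset.sum_const, smul_eq_mul, Finset.card_compl]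

end CutEdges

section LowerBound

variable {V : Type*} [Fintype V] [DecidableEq V] (G : SimpleGraph V) [DecidableRel G.Adj]
  {k : ℕ} (hkn : k ≤ Fintype.card V)
  (hm : k.choose 2 + (Fintype.card V - k) * (k - 1) < G.edgeFinset.card)
include hkn hm

lemma add_one_le_card_add_tauMax_of_isVertexCut {X : Finset V} (hX : G.IsVertexCut X) :
    k + 1 ≤ X.card + (G.delVerts X).tauMax := by
  have := hX.nonempty
  have hτ := (G.delVerts X).tauMax_pos
  have hedges := G.two_mul_card_edgeFinset_le X
  have hXcard := X.card_le_univ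
  have hchoose := Nat.two_mul_choose_two k
  by_contra! hlt
  set n := Fintype.card V
  set x := X.card
  have hdeg : x + (G.delVerts X).tauMax - 1 ≤ k - 1 := by omega
  have hb : 2 * G.edgeFinset.card ≤ x * (n - 1) + (n - x) * (k - 1) :=
    hedges.trans (Nat.add_le_add_left (Nat.mul_le_mul_left _ hdeg) _)
  have hk : 1 ≤ k := by omega
  zify [hk, hkn, hXcard, (by omega : x ≤ k), (by omega : 1 ≤ n)] at hm hb hchoose
  nlinarith [mul_nonneg (by omega : (0:ℤ) ≤ k - 1 - x) (by omega : (0:ℤ) ≤ n - k)]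

lemma div_le_of_isVertexCut {X : Finset V} (hX : G.IsVertexCut X) :
    ((k : ℝ) + 1) / ((Fintype.card V : ℝ) - k) ≤
      ((X.card : ℝ) + (G.delVerts X).tauMax) / (G.delVerts X).omegaComp := by
  have hsum := (G.delVerts X).omegaComp_add_tauMax_le
  rw [← Nat.card_eq_fintype_card, card_delVerts_verts] at hsum
  have hkτ := G.add_one_le_card_add_tauMax_of_isVertexCut hkn hm hX
  have hω : (G.delVerts X).omegaComp ≤ Fintype.card V - k := by
    unfold IsVertexCut at hX
    omega
  have hω' : ((G.delVerts X).omegaComp : ℝ) ≤ (Fintype.card V : ℝ) - k := by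
    rw [← Nat.cast_sub hkn]
    exact_mod_cast hω
  have hωpos : (0 : ℝ) < (G.delVerts X).omegaComp := by
    exact_mod_cast Nat.zero_lt_of_lt hX
  exact div_le_div₀ (by positivity) (by exact_mod_cast hkτ) hωpos hω'

end LowerBound

section Extremal

variable {V : Type*} [Fintype V] [DecidableEq V]

/-- Keep a spanning star of `G` and add further edges of `G` until there are `m` of them. -/
lemma exists_connected_le_card_edgeSet_eq (G : SimpleGraph V) [DecidableRel G.Adj] {a : V}
    (ha : ∀ v, v ≠ a → G.Adj a v) {m : ℕ} (hm₁ : Fintype.card V - 1 ≤ m)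
    (hm₂ : m ≤ G.edgeFinset.card) :
    ∃ H ≤ G, H.Connected ∧ Nat.card H.edgeSet = m := by
  let star : Finset (Sym2 V) := (Finset.univ.erase a).image fun v => s(a, v)
  have hstar_card : star.card = Fintype.card V - 1 := by
    rw [Finset.card_image_of_injective _ fun _ _ => Sym2.congr_right.mp,
      Finset.card_erase_of_mem (Finset.mem_univ a), Finset.card_univ]
  have hstar : star ⊆ G.edgeFinset := by
    simp only [star, Finset.image_subset_iff, Finset.mem_erase, mem_edgeFinset, mem_edgeSet]
    exact fun v ⟨hva, _⟩ => ha v hva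
  obtain ⟨E, hstarE, hEG, hEcard⟩ :=
    Finset.exists_subsuperset_card_eq hstar (hstar_card.trans_le hm₁) hm₂
  have hedges : (G.deleteEdges (G.edgeSet \ E)).edgeSet = E := by
    rw [edgeSet_deleteEdges, Set.sdiff_sdiff_cancel_left]
    exact fun e he => mem_edgeFinset.mp (hEG he)
  refine ⟨G.deleteEdges (G.edgeSet \ E), deleteEdges_le _, ?_, ?_⟩
  · have hreach (v : V) : (G.deleteEdges (G.edgeSet \ E)).Reachable a v := by
      rcases eq_or_ne v a with rfl | hva
      · rfl
      refine Adj.reachable ?_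
      rw [← mem_edgeSet, hedges]
      exact hstarE (Finset.mem_image_of_mem _ (Finset.mem_erase.mpr ⟨hva, Finset.mem_univ v⟩))
    have : Nonempty V := ⟨a⟩
    exact Connected.mk fun u v => (hreach u).symm.trans (hreach v)
  · rw [hedges, Nat.card_coe_set_eq, Set.ncard_coe_finset, hEcard]

end Extremal

section CompleteSplit

variable {V : Type*} (K : Finset V)

/-- The complete split graph: `K` is a clique, its complement is independent, and every vertex of
`K` is joined to every vertex outside `K`. -/
def completeSplitGraph : SimpleGraph V := fromRel fun u _ => u ∈ K

lemma completeSplitGraph_adj {u v : V} :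
    (completeSplitGraph K).Adj u v ↔ u ≠ v ∧ (u ∈ K ∨ v ∈ K) :=
  fromRel_adj _ u v

lemma delVerts_eq_bot_of_le_completeSplitGraph {H : SimpleGraph V}
    (hH : H ≤ completeSplitGraph K) : H.delVerts K = ⊥ :=
  H.delVerts_eq_bot fun u v hu hv huv => by
    simpa [hu, hv] using (completeSplitGraph_adj K).mp (hH huv)

variable [Fintype V] [DecidableEq V]

instance : DecidableRel (completeSplitGraph K).Adj := fun u v =>
  inferInstanceAs (Decidable (u ≠ v ∧ (u ∈ K ∨ v ∈ K)))

lemma degree_completeSplitGraph (v : V) :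
    (completeSplitGraph K).degree v = if v ∈ K then Fintype.card V - 1 else K.card := by
  rw [← card_neighborFinset_eq_degree]
  split_ifs with hv
  · rw [← Finset.card_univ, ← Finset.card_erase_of_mem (Finset.mem_univ v)]
    congr 1
    ext w
    simp [completeSplitGraph_adj, hv, eq_comm]
  · congr 1
    ext w
    simp only [mem_neighborFinset, completeSplitGraph_adj, hv, false_or]
    exact ⟨And.right, fun hw => ⟨fun h => hv (h ▸ hw), hw⟩⟩

lemma card_edgeFinset_completeSplitGraph :
    (completeSplitGraph K).edgeFinset.card =
      K.card.choose 2 + K.card * (Fintype.card V - K.card) := by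
  have hsum := sum_degrees_eq_twice_card_edges (completeSplitGraph K)
  rw [Finset.sum_congr rfl fun v _ => degree_completeSplitGraph K v, Finset.sum_ite,
    Finset.sum_const, Finset.sum_const, Finset.filter_mem_eq_inter, Finset.univ_inter,
    Finset.filter_not, Finset.filter_mem_eq_inter, Finset.univ_inter,
    ← Finset.compl_eq_univ_sdiff, Finset.card_compl, smul_eq_mul, smul_eq_mul] at hsum
  have hchoose := Nat.two_mul_choose_two K.card
  have hK := K.card_le_univ
  rcases Nat.eq_zero_or_pos K.card with hK0 | hKpos
  · simp_all
  · zify [hK, hKpos, hKpos.trans_le hK] at hsum hchoose ⊢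
    linarith

end CompleteSplit

end SimpleGraph

theorem min_tenacity_general (n m k : ℕ) (h1 : n - 1 ≤ m) (h2 : m ≤ n.choose 2 - 1)
    (hk1 : k.choose 2 + (n - k) * (k - 1) < m)
    (hk2 : m ≤ k.choose 2 + (n - k) * k)
    (G : SimpleGraph (Fin n)) (hGm : Nat.card G.edgeSet = m)
    (hmin : ∀ H : SimpleGraph (Fin n), H.Connected → Nat.card H.edgeSet = m →
      G.tenacity ≤ H.tenacity) :
    G.tenacity = ((k : ℝ) + 1) / ((n : ℝ) - (k : ℝ)) := by
  classical
  obtain ⟨hk, hkn⟩ := Nat.one_le_and_add_two_le_of_choose_two_bounds h2 hk1 hk2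
  refine le_antisymm ?_ ?_
  · obtain ⟨K, -, hK⟩ := (Finset.univ : Finset (Fin n)).exists_subset_card_eq (n := k)
      (by rw [Finset.card_univ, Fintype.card_fin]; omega)
    obtain ⟨a, ha⟩ := Finset.card_pos.mp (hK ▸ hk)
    obtain ⟨H, hHK, hHconn, hHm⟩ :=
      (completeSplitGraph K).exists_connected_le_card_edgeSet_eq (m := m)
        (fun v hva => (completeSplitGraph_adj K).mpr ⟨hva.symm, .inl ha⟩)
        (by rwa [Fintype.card_fin])
        (by rw [card_edgeFinset_completeSplitGraph, hK, Fintype.card_fin, mul_comm]; exact hk2)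
    calc G.tenacity ≤ H.tenacity := hmin H hHconn hHm
      _ ≤ _ := H.tenacity_le_of_delVerts_eq_bot (delVerts_eq_bot_of_le_completeSplitGraph K hHK)
          (by rw [hK, Fintype.card_fin]; omega)
      _ = _ := by rw [hK, Fintype.card_fin]
  · have hG : G ≠ ⊤ := by
      rintro rfl
      rw [Nat.card_eq_fintype_card, ← edgeFinset_card, card_edgeFinset_top_eq_card_choose_two,
        Fintype.card_fin] at hGm
      omega
    have hGm' : G.edgeFinset.card = m := by
      rw [edgeFinset_card, ← Nat.card_eq_fintype_card, hGm]
    refine G.le_tenacity (G.exists_isVertexCut_of_ne_top hG) fun X hX => ?_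
    simpa only [Fintype.card_fin] using
      G.div_le_of_isVertexCut (k := k) (by rw [Fintype.card_fin]; omega)
        (by rwa [Fintype.card_fin, hGm']) hX

theorem min_tenacity (n m k : ℕ) (h1 : n - 1 ≤ m) (h2 : m ≤ n.choose 2 - 1)
    (hk1 : k.choose 2 + (n - k) * (k - 1) < m)
    (hk2 : m ≤ k.choose 2 + (n - k) * k)
    (G : SimpleGraph (Fin n)) (hG : G.Connected) (hGm : Nat.card G.edgeSet = m)
    (hmin : ∀ H : SimpleGraph (Fin n), H.Connected → Nat.card H.edgeSet = m →
      G.tenacity ≤ H.tenacity) :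
    G.tenacity = ((k : ℝ) + 1) / ((n : ℝ) - (k : ℝ)) :=
  min_tenacity_general n m k h1 h2 hk1 hk2 G hGm hmin
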